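/- For every real u with 0 < u < 1/2 one has u(1 − u)·cot(πu) < 1/π, and for every real u with 1/2 ≤ u < 1 one has u(1 − u)·cot(πu) ≤ 0. -/
import Mathlib


/-- For `0 < u < 1/2` one has `u(1-u)cot(πu) < 1/π`, and for `1/2 ≤ u < 1` one has
`u(1-u)cot(πu) ≤ 0`. -/
theorem cot_weighted_bounds (u : ℝ) :
    (0 < u → u < 1 / 2 → u * (1 - u) * Real.cot (Real.pi * u) < 1 / Real.pi) ∧
      (1 / 2 ≤ u → u < 1 → u * (1 - u) * Real.cot (Real.pi * u) ≤ 0) := by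
  have hpi := Real.pi_pos
  constructor
  · intro h0 h2
    set x := Real.pi * u with hx
    have hx0 : 0 < x := by positivity
    have hx2 : x < Real.pi / 2 := by
      rw [hx, div_eq_mul_inv]
      nlinarith
    have hsin : 0 < Real.sin x := Real.sin_pos_of_pos_of_lt_pi hx0 (by linarith)
    have hcos : 0 < Real.cos x := Real.cos_pos_of_mem_Ioo ⟨by linarith, hx2⟩
    have htan := Real.lt_tan hx0 hx2
    rw [Real.tan_eq_sin_div_cos, lt_div_iff₀ hcos] at htan
    have hcot : Real.cot x < 1 / x := by
      rw [Real.cot_eq_cos_div_sin, div_lt_div_iff₀ hsin hx0]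
      linarith
    have h1u : 0 < u * (1 - u) := by nlinarith
    have : u * (1 - u) * Real.cot x < u * (1 - u) * (1 / x) :=
      mul_lt_mul_of_pos_left hcot h1u
    have hxne : x ≠ 0 := ne_of_gt hx0
    calc u * (1 - u) * Real.cot x < u * (1 - u) * (1 / x) := this
      _ = (1 - u) / Real.pi := by field_simp [hx]; ring
      _ < 1 / Real.pi := by
          gcongr <;> linarith
  · intro h1 h2
    set x := Real.pi * u with hx
    have hx1 : Real.pi / 2 ≤ x := by
      rw [hx]; nlinarith
    have hx2 : x < Real.pi := by rw [hx]; nlinarith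
    have hsin : 0 < Real.sin x := Real.sin_pos_of_pos_of_lt_pi (by linarith) hx2
    have hcos : Real.cos x ≤ 0 := Real.cos_nonpos_of_pi_div_two_le_of_le hx1 (by linarith)
    have hcot : Real.cot x ≤ 0 := by
      rw [Real.cot_eq_cos_div_sin]
      exact div_nonpos_of_nonpos_of_nonneg hcos hsin.le
    have h1u : 0 ≤ u * (1 - u) := by nlinarith
    exact mul_nonpos_of_nonneg_of_nonpos h1u hcot
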